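/- arXiv:2305.14816 — 3 statements merged into one kernel-verified Lean document; each statement's English description precedes it below -/
import Mathlib

section
/- Per-trajectory vs. per-step concentrability gap (Proposition): For any S ≥ 1, A ≥ 2, H ≥ 1, C ≥ 1, there exists an MDP with |S| states, |A| actions, horizon H, a Markovian target policy π_tar and a behavior policy π_b (with μ0 = d^{π_b}) such that the per-step concentrability C_st := max_{s,a,h} d^{π_tar}_h(s,a)/μ_{0,h}(s,a) equals C while the per-trajectory concentrability C_tr := max_τ d^{π_tar}(τ)/μ0(τ) equals C^H. -/
/-!
When the transitions ignore the action, every policy induces the same state distributions, so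
state-action and trajectory probabilities differ only through the policy factors. The target
policy always plays `a₁`; the behavior policy plays `a₁` with probability `C⁻¹` and otherwise
`a₂`. The per-step ratio is then at most `C`, attained at `a₁`, and a trajectory picks up one
such factor per step, so the all-`a₁` trajectory has ratio `C ^ H`.
-/

/-- State visitation distribution at step `h` of a stochastic Markovian policy. -/
noncomputable def dStateS {S A : Type*} [Fintype S] [Fintype A]
    (ρ : S → ℝ) (P : ℕ → S → A → S → ℝ) (π : ℕ → S → A → ℝ) : ℕ → S → ℝ
  | 0 => ρ
  | h + 1 => fun s' => ∑ s : S, ∑ a : A, dStateS ρ P π h s * π h s a * P h s a s'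

/-- Probability of a full trajectory `τ` under a stochastic Markovian policy `π`,
initial distribution `ρ` and transitions `P`. -/
noncomputable def trajProbM {S A : Type*} (H : ℕ) (ρ : S → ℝ)
    (P : ℕ → S → A → S → ℝ) (π : ℕ → S → A → ℝ) (τ : Fin H → S × A) : ℝ :=
  ∏ h : Fin H,
    (if h.1 = 0 then ρ (τ h).1
     else
       P (h.1 - 1) (τ ⟨h.1 - 1, lt_of_le_of_lt (Nat.sub_le _ _) h.isLt⟩).1
         (τ ⟨h.1 - 1, lt_of_le_of_lt (Nat.sub_le _ _) h.isLt⟩).2 (τ h).1) *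
    π h.1 (τ h).1 (τ h).2

section StateDistribution

variable {S A : Type*} [Fintype S] [Fintype A]

theorem dStateS_nonneg {ρ : S → ℝ} {P : ℕ → S → A → S → ℝ} {π : ℕ → S → A → ℝ}
    (hρ : ∀ s, 0 ≤ ρ s) (hP : ∀ h s a s', 0 ≤ P h s a s') (hπ : ∀ h s a, 0 ≤ π h s a) :
    ∀ h s, 0 ≤ dStateS ρ P π h s
  | 0, s => hρ s
  | h + 1, s' => Finset.sum_nonneg fun s _ => Finset.sum_nonneg fun a _ =>
      mul_nonneg (mul_nonneg (dStateS_nonneg hρ hP hπ h s) (hπ h s a)) (hP h s a s')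

theorem dStateS_succ_of_action_independent (ρ : S → ℝ) (Q : ℕ → S → S → ℝ)
    {π : ℕ → S → A → ℝ} (hπ : ∀ h s, ∑ a, π h s a = 1) (h : ℕ) (s' : S) :
    dStateS ρ (fun h s _ => Q h s) π (h + 1) s' =
      ∑ s, dStateS ρ (fun h s _ => Q h s) π h s * Q h s s' := by
  refine Finset.sum_congr rfl fun s _ => ?_
  rw [← Finset.sum_mul, ← Finset.mul_sum, hπ, mul_one]

theorem dStateS_eq_of_action_independent (ρ : S → ℝ) (Q : ℕ → S → S → ℝ)
    {π π' : ℕ → S → A → ℝ} (hπ : ∀ h s, ∑ a, π h s a = 1) (hπ' : ∀ h s, ∑ a, π' h s a = 1) :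
    dStateS ρ (fun h s _ => Q h s) π = dStateS ρ (fun h s _ => Q h s) π' := by
  funext h s'
  induction h generalizing s' with
  | zero => rfl
  | succ h ih =>
    simp only [dStateS_succ_of_action_independent ρ Q hπ,
      dStateS_succ_of_action_independent ρ Q hπ', ih]

theorem dStateS_mul_le_of_action_independent {ρ : S → ℝ} {Q : ℕ → S → S → ℝ}
    {π π' : ℕ → S → A → ℝ} {C : ℝ} (hρ : ∀ s, 0 ≤ ρ s) (hQ : ∀ h s s', 0 ≤ Q h s s')
    (hπ : ∀ h s, ∑ a, π h s a = 1) (hπ' : ∀ h s, ∑ a, π' h s a = 1)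
    (hπ'_nonneg : ∀ h s a, 0 ≤ π' h s a) (hle : ∀ h s a, π h s a ≤ C * π' h s a) (h : ℕ) (s : S)
    (a : A) :
    dStateS ρ (fun h s _ => Q h s) π h s * π h s a ≤
      C * (dStateS ρ (fun h s _ => Q h s) π' h s * π' h s a) := by
  rw [dStateS_eq_of_action_independent ρ Q hπ hπ', mul_left_comm]
  exact mul_le_mul_of_nonneg_left (hle h s a)
    (dStateS_nonneg hρ (fun h s _ => hQ h s) hπ'_nonneg h s)

end StateDistribution

section Trajectory

variable {S A : Type*} {H : ℕ} {ρ : S → ℝ} {P : ℕ → S → A → S → ℝ} {π π' : ℕ → S → A → ℝ}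
  {C : ℝ}

theorem trajProbM_le_pow_mul (hρ : ∀ s, 0 ≤ ρ s) (hP : ∀ h s a s', 0 ≤ P h s a s')
    (hπ : ∀ h s a, 0 ≤ π h s a) (hle : ∀ h s a, π h s a ≤ C * π' h s a) (τ : Fin H → S × A) :
    trajProbM H ρ P π τ ≤ C ^ H * trajProbM H ρ P π' τ := by
  rw [trajProbM, trajProbM, ← Fin.prod_const, ← Finset.prod_mul_distrib]
  refine Finset.prod_le_prod
    (fun h _ => mul_nonneg (ite_nonneg (hρ _) (hP _ _ _ _)) (hπ _ _ _)) fun h _ => ?_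
  rw [mul_left_comm]
  exact mul_le_mul_of_nonneg_left (hle _ _ _) (ite_nonneg (hρ _) (hP _ _ _ _))

theorem trajProbM_eq_pow_mul {τ : Fin H → S × A}
    (heq : ∀ h : Fin H, π h (τ h).1 (τ h).2 = C * π' h (τ h).1 (τ h).2) :
    trajProbM H ρ P π τ = C ^ H * trajProbM H ρ P π' τ := by
  rw [trajProbM, trajProbM, ← Fin.prod_const, ← Finset.prod_mul_distrib]
  refine Finset.prod_congr rfl fun h _ => ?_
  rw [heq]
  ring

theorem trajProbM_pos (hρ : ∀ s, 0 < ρ s) (hP : ∀ h s a s', 0 < P h s a s')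
    {τ : Fin H → S × A} (hπ : ∀ h : Fin H, 0 < π h (τ h).1 (τ h).2) :
    0 < trajProbM H ρ P π τ :=
  Finset.prod_pos fun h _ => mul_pos (ite_pos (hρ _) (hP _ _ _ _)) (hπ h)

end Trajectory

section BehaviorPolicy

variable {A : Type*} [DecidableEq A] {C : ℝ} {a₁ a₂ : A}

noncomputable def behaviorPolicy (C : ℝ) (a₁ a₂ : A) (a : A) : ℝ :=
  if a = a₁ then C⁻¹ else if a = a₂ then 1 - C⁻¹ else 0

theorem behaviorPolicy_left : behaviorPolicy C a₁ a₂ a₁ = C⁻¹ := if_pos rfl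

theorem behaviorPolicy_left_pos (hC : 0 < C) : 0 < behaviorPolicy C a₁ a₂ a₁ := by
  rw [behaviorPolicy_left]
  positivity

theorem behaviorPolicy_nonneg (hC : 1 ≤ C) (a : A) : 0 ≤ behaviorPolicy C a₁ a₂ a := by
  have : C⁻¹ ≤ 1 := inv_le_one_of_one_le₀ hC
  have : 0 ≤ C⁻¹ := inv_nonneg.mpr (by linarith)
  unfold behaviorPolicy
  split_ifs <;> linarith

theorem sum_behaviorPolicy [Fintype A] (ha : a₁ ≠ a₂) : ∑ a, behaviorPolicy C a₁ a₂ a = 1 := by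
  simp only [behaviorPolicy]
  rw [Fintype.sum_eq_add a₁ a₂ ha fun a ⟨h₁, h₂⟩ => by simp [h₁, h₂]]
  simp [ha.symm]

theorem pi_single_left_eq_mul_behaviorPolicy (hC : C ≠ 0) :
    (Pi.single a₁ 1 : A → ℝ) a₁ = C * behaviorPolicy C a₁ a₂ a₁ := by
  rw [Pi.single_eq_same, behaviorPolicy_left, mul_inv_cancel₀ hC]

theorem pi_single_le_mul_behaviorPolicy (hC : 1 ≤ C) (ha : a₁ ≠ a₂) (a : A) :
    (Pi.single a₁ 1 : A → ℝ) a ≤ C * behaviorPolicy C a₁ a₂ a := by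
  rcases eq_or_ne a a₁ with rfl | h₁
  · exact (pi_single_left_eq_mul_behaviorPolicy (by positivity)).le
  · rw [Pi.single_eq_of_ne h₁]
    exact mul_nonneg (by positivity) (behaviorPolicy_nonneg hC a)

end BehaviorPolicy

/-- The per-trajectory concentrability coefficient can be `C^H` while the per-step
concentrability coefficient is `C`. -/
theorem stmt_13 (S A H : ℕ) (hS : 1 ≤ S) (hA : 2 ≤ A) (hH : 1 ≤ H)
    (C : ℝ) (hC : 1 ≤ C) :
    ∃ (ρ : Fin S → ℝ) (P : ℕ → Fin S → Fin A → Fin S → ℝ)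
      (πtar πb : ℕ → Fin S → Fin A → ℝ),
      (∀ s, 0 ≤ ρ s) ∧ (∑ s : Fin S, ρ s = 1) ∧
      (∀ h s a s', 0 ≤ P h s a s') ∧ (∀ h s a, ∑ s' : Fin S, P h s a s' = 1) ∧
      (∀ h s a, 0 ≤ πtar h s a) ∧ (∀ h s, ∑ a : Fin A, πtar h s a = 1) ∧
      (∀ h s a, 0 ≤ πb h s a) ∧ (∀ h s, ∑ a : Fin A, πb h s a = 1) ∧
      -- per-step concentrability equals C
      (∀ h, h < H → ∀ s a,
        dStateS ρ P πtar h s * πtar h s a ≤ C * (dStateS ρ P πb h s * πb h s a)) ∧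
      (∃ h, h < H ∧ ∃ s a, 0 < dStateS ρ P πb h s * πb h s a ∧
        dStateS ρ P πtar h s * πtar h s a = C * (dStateS ρ P πb h s * πb h s a)) ∧
      -- per-trajectory concentrability equals C^H
      (∀ τ : Fin H → Fin S × Fin A,
        trajProbM H ρ P πtar τ ≤ C ^ H * trajProbM H ρ P πb τ) ∧
      (∃ τ : Fin H → Fin S × Fin A, 0 < trajProbM H ρ P πb τ ∧
        trajProbM H ρ P πtar τ = C ^ H * trajProbM H ρ P πb τ) := by
  have hC₀ : 0 < C := by linarith
  let s₀ : Fin S := ⟨0, hS⟩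
  let a₁ : Fin A := ⟨0, by omega⟩
  let a₂ : Fin A := ⟨1, by omega⟩
  have ha : a₁ ≠ a₂ := by simp [a₁, a₂, Fin.ext_iff]
  let ρ : Fin S → ℝ := fun _ => (S : ℝ)⁻¹
  let πtar : ℕ → Fin S → Fin A → ℝ := fun _ _ => Pi.single a₁ 1
  let πb : ℕ → Fin S → Fin A → ℝ := fun _ _ => behaviorPolicy C a₁ a₂
  have hρ : ∀ s, 0 < ρ s := fun _ => by positivity
  have hρ₀ : ∀ s, 0 ≤ ρ s := fun s => (hρ s).le
  have hρsum : ∑ s, ρ s = 1 := by simp [ρ]; field_simp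
  have hπtar : ∀ h s, ∑ a, πtar h s a = 1 := fun _ _ => by simp [πtar]
  have hπb : ∀ h s, ∑ a, πb h s a = 1 := fun _ _ => sum_behaviorPolicy ha
  have hπtar_nonneg : ∀ h s, 0 ≤ πtar h s := fun _ _ => Pi.single_nonneg.2 zero_le_one
  have hπb_nonneg : ∀ h s a, 0 ≤ πb h s a := fun _ _ => behaviorPolicy_nonneg hC
  have hle : ∀ h s a, πtar h s a ≤ C * πb h s a := fun _ _ =>
    pi_single_le_mul_behaviorPolicy hC ha
  have heq : ∀ h s, πtar h s a₁ = C * πb h s a₁ := fun _ _ =>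
    pi_single_left_eq_mul_behaviorPolicy hC₀.ne'
  refine ⟨ρ, fun _ _ _ => ρ, πtar, πb, hρ₀, hρsum, fun _ _ _ => hρ₀, fun _ _ _ => hρsum,
    fun h s => hπtar_nonneg h s, hπtar, hπb_nonneg, hπb,
    fun h _ => dStateS_mul_le_of_action_independent hρ₀ (fun _ _ => hρ₀) hπtar hπb hπb_nonneg hle h,
    ⟨0, hH, s₀, a₁, mul_pos (hρ s₀) (behaviorPolicy_left_pos hC₀),
      by rw [heq 0 s₀, mul_left_comm]; rfl⟩,
    trajProbM_le_pow_mul hρ₀ (fun _ _ _ => hρ₀) (fun h s => hπtar_nonneg h s) hle,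
    ⟨fun _ => (s₀, a₁), trajProbM_pos hρ (fun _ _ _ => hρ) fun _ => behaviorPolicy_left_pos hC₀,
      trajProbM_eq_pow_mul fun h => heq h s₀⟩⟩
end

section
/- KL computation for the hard instance: Let μ be a distribution on a finite trajectory set T with a distinguished trajectory τ*, μ(τ*) = 1/C. Two preference models differ only in trajectory τ*: model i assigns preference probability σ((-1)^{i+1}x) when comparing τ* against any τ ≠ τ*. Then the KL divergence between the joint distributions μ⊗μ⊗P₁ and μ⊗μ⊗P₂ of one sample (τ⁰,τ¹,o) satisfies KL ≤ 2·(1/C)·(1-1/C)·KL(Bern(σ(x))∥Bern(σ(-x))) ≤ 2e^{1/2}x²/C. -/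
/-- The sigmoid link function σ(x) = 1/(1+e^{-x}). -/
noncomputable def sigmoid (x : ℝ) : ℝ := 1 / (1 + Real.exp (-x))

/-- KL divergence between Bernoulli(p) and Bernoulli(q). -/
noncomputable def klBern (p q : ℝ) : ℝ :=
  p * Real.log (p / q) + (1 - p) * Real.log ((1 - p) / (1 - q))

lemma hsig (y : ℝ) : sigmoid (-y) = 1 - sigmoid y := by
  unfold sigmoid
  have h1 : (0:ℝ) < 1 + Real.exp (-y) := by positivity
  have h2 : (0:ℝ) < 1 + Real.exp y := by positivity
  have he : Real.exp y * Real.exp (-y) = 1 := by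
    rw [← Real.exp_add]; simp
  rw [neg_neg]
  field_simp
  nlinarith [he]

lemma hratio (y : ℝ) : Real.log (sigmoid y / (1 - sigmoid y)) = y := by
  have h1 : (0:ℝ) < 1 + Real.exp (-y) := by positivity
  have hp : sigmoid y / (1 - sigmoid y) = Real.exp y := by
    rw [← hsig]
    unfold sigmoid
    have h2 : (0:ℝ) < 1 + Real.exp y := by positivity
    have he : Real.exp y * Real.exp (-y) = 1 := by rw [← Real.exp_add]; simp
    field_simp
    nlinarith [he]
  rw [hp, Real.log_exp]

lemma hK (y : ℝ) : klBern (sigmoid y) (sigmoid (-y)) = (2 * sigmoid y - 1) * y := by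
  unfold klBern
  rw [hsig, hratio]
  have h2 : Real.log ((1 - sigmoid y) / (1 - (1 - sigmoid y))) = -y := by
    rw [sub_sub_cancel, show (1 - sigmoid y)/sigmoid y = (sigmoid y/(1-sigmoid y))⁻¹ by rw [inv_div], Real.log_inv, hratio]
  rw [h2]; ring

lemma hKsym (y : ℝ) : klBern (sigmoid (-y)) (sigmoid y) = klBern (sigmoid y) (sigmoid (-y)) := by
  have := hK (-y)
  rw [neg_neg] at this
  rw [this, hK, hsig]
  ring

lemma hKbound {y : ℝ} (hy : 0 < y) :
    0 ≤ klBern (sigmoid y) (sigmoid (-y)) ∧ klBern (sigmoid y) (sigmoid (-y)) ≤ y ^ 2 := by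
  rw [hK]
  have h1 : (0:ℝ) < 1 + Real.exp (-y) := by positivity
  have hle : Real.exp (-y) ≤ 1 := by
    rw [Real.exp_le_one_iff]; linarith
  have hge : 1 - y ≤ Real.exp (-y) := by
    have := Real.add_one_le_exp (-y); linarith
  have hσ : sigmoid y = 1 / (1 + Real.exp (-y)) := rfl
  have h0 : 0 ≤ 2 * sigmoid y - 1 := by
    have : 1 ≤ 2 * sigmoid y := by
      rw [hσ, mul_one_div, le_div_iff₀ h1]; nlinarith
    linarith
  have h2 : 2 * sigmoid y - 1 ≤ y := by
    have : 2 * sigmoid y ≤ y + 1 := by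
      rw [hσ, mul_one_div, div_le_iff₀ h1]; nlinarith [Real.exp_pos (-y)]
    linarith
  constructor
  · positivity
  · nlinarith


/-- KL computation for the hard instance: the two preference models differ only when
exactly one of the two compared trajectories is `τ*` (which has mass `1/C` under `μ`),
giving `KL ≤ 2·(1/C)·(1-1/C)·KL(Bern(σ(x))‖Bern(σ(-x))) ≤ 2e^{1/2}x²/C`. -/
theorem stmt_15 {T : Type*} [Fintype T] [DecidableEq T]
    (μ : T → ℝ) (hμ0 : ∀ τ, 0 ≤ μ τ) (hμ1 : ∑ τ : T, μ τ = 1)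
    (τstar : T) (C : ℝ) (hC : 1 ≤ C) (hμstar : μ τstar = 1 / C)
    (x : ℝ) (hx0 : 0 < x) (hx1 : x < 1 / 2)
    (p1 p2 : T → T → ℝ)
    (hp1 : ∀ τ0 τ1, p1 τ0 τ1 =
      if τ1 = τstar ∧ τ0 ≠ τstar then sigmoid x
      else if τ0 = τstar ∧ τ1 ≠ τstar then sigmoid (-x) else 1 / 2)
    (hp2 : ∀ τ0 τ1, p2 τ0 τ1 =
      if τ1 = τstar ∧ τ0 ≠ τstar then sigmoid (-x)
      else if τ0 = τstar ∧ τ1 ≠ τstar then sigmoid x else 1 / 2) :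
    (∑ τ0 : T, ∑ τ1 : T, μ τ0 * μ τ1 * klBern (p1 τ0 τ1) (p2 τ0 τ1)) ≤
        2 * (1 / C) * (1 - 1 / C) * klBern (sigmoid x) (sigmoid (-x)) ∧
      2 * (1 / C) * (1 - 1 / C) * klBern (sigmoid x) (sigmoid (-x)) ≤
        2 * Real.exp (1 / 2) * x ^ 2 / C := by
  obtain ⟨hK0, hKx2⟩ := hKbound hx0
  set K := klBern (sigmoid x) (sigmoid (-x)) with hKdef
  have hC0 : 0 < C := lt_of_lt_of_le one_pos hC
  constructor
  · have hterm : ∀ τ0 τ1 : T, μ τ0 * μ τ1 * klBern (p1 τ0 τ1) (p2 τ0 τ1)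
        = μ τ0 * μ τ1 * (if (τ1 = τstar ∧ τ0 ≠ τstar) ∨ (τ0 = τstar ∧ τ1 ≠ τstar) then K else 0) := by
      intro τ0 τ1
      rw [hp1, hp2]
      by_cases h1 : τ1 = τstar ∧ τ0 ≠ τstar
      · simp [h1, hKdef]
      · by_cases h2 : τ0 = τstar ∧ τ1 ≠ τstar
        · simp [h1, h2, hKsym, hKdef]
        · have h3 : klBern (1/2 : ℝ) (1/2) = 0 := by norm_num [klBern]
          have hor : ¬((τ1 = τstar ∧ τ0 ≠ τstar) ∨ (τ0 = τstar ∧ τ1 ≠ τstar)) := by tauto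
          rw [if_neg h1, if_neg h2, if_neg h1, if_neg h2, if_neg hor, h3, mul_zero]
    have hsum1 : ∑ τ ∈ Finset.univ.erase τstar, μ τ = 1 - μ τstar := by
      rw [eq_sub_iff_add_eq, Finset.sum_erase_add _ _ (Finset.mem_univ τstar), hμ1]
    have key : (∑ τ0 : T, ∑ τ1 : T, μ τ0 * μ τ1 * klBern (p1 τ0 τ1) (p2 τ0 τ1))
        = 2 * μ τstar * (1 - μ τstar) * K := by
      simp_rw [hterm]
      rw [← Finset.sum_erase_add _ _ (Finset.mem_univ τstar)]
      have hA : ∀ τ0 ∈ Finset.univ.erase τstar,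
          (∑ τ1 : T, μ τ0 * μ τ1 *
            (if (τ1 = τstar ∧ τ0 ≠ τstar) ∨ (τ0 = τstar ∧ τ1 ≠ τstar) then K else 0))
          = μ τ0 * μ τstar * K := by
        intro τ0 hτ0
        have hne : τ0 ≠ τstar := Finset.ne_of_mem_erase hτ0
        rw [Finset.sum_eq_single τstar]
        · simp [hne]
        · intro b _ hb
          simp [hb, hne]
        · simp
      rw [Finset.sum_congr rfl hA, ← Finset.sum_mul, ← Finset.sum_mul, hsum1]
      have hB : (∑ τ1 : T, μ τstar * μ τ1 *
            (if (τ1 = τstar ∧ τstar ≠ τstar) ∨ (τstar = τstar ∧ τ1 ≠ τstar) then K else 0))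
          = μ τstar * (1 - μ τstar) * K := by
        rw [← Finset.sum_erase_add _ _ (Finset.mem_univ τstar)]
        have hC1 : ∀ τ1 ∈ Finset.univ.erase τstar,
            μ τstar * μ τ1 *
              (if (τ1 = τstar ∧ τstar ≠ τstar) ∨ (τstar = τstar ∧ τ1 ≠ τstar) then K else 0)
            = μ τ1 * (μ τstar * K) := by
          intro τ1 hτ1
          rw [if_pos (Or.inr ⟨rfl, Finset.ne_of_mem_erase hτ1⟩)]; ring
        rw [Finset.sum_congr rfl hC1, if_neg (by simp), ← Finset.sum_mul, hsum1]
        ring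
      rw [hB]
      ring
    rw [key, hμstar]
  · have he1 : (1:ℝ) ≤ Real.exp (1/2) := by
      rw [Real.one_le_exp_iff]; norm_num
    have hfrac : 0 ≤ 1 - 1/C := by
      have : 1/C ≤ 1 := by rw [div_le_one hC0]; exact hC
      linarith
    have hfrac1 : 1 - 1/C ≤ 1 := by
      have : 0 < 1/C := by positivity
      linarith
    have hCi : 0 < 1/C := by positivity
    have h1 : (1 - 1/C) * K ≤ x^2 := by nlinarith
    calc 2 * (1/C) * (1 - 1/C) * K = 2 * (1/C) * ((1 - 1/C) * K) := by ring
      _ ≤ 2 * (1/C) * x^2 := by nlinarith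
      _ ≤ 2 * Real.exp (1/2) * x^2 / C := by
          rw [show 2 * (1/C) * x^2 = 2 * 1 * x^2 / C by ring]
          gcongr
end

section
/- Margin-based fast-rate bound (core inequality in Theorem 6.5): Fix h. Suppose (i) the soft margin: P_{s∼d^{π*}_h}(0 < |Q*_h(s,π*(s)) - Q*_h(s,a)| < α) ≤ (α/α₀)^β for all a and α > 0; (ii) the advantage estimation error: E_{s∼d^{π*}_h}[Σ_{a∈A} |A*_h(s,π*(s)) - A*_h(s,a) - Â_h(s,π*(s)) + Â_h(s,a)|²] ≤ ε². Then for every α > 0, E_{s∼d^{π*}_h}[Σ_{a∈A} 1{Â_h(s,a) ≥ Â_h(s,π*(s))}·1{Q*_h(s,a) < Q*_h(s,π*(s))}] ≤ |A|(α/α₀)^β + ε²/α². -/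
/-!
A strictly suboptimal action `a` is misranked by `Â` only if its `Q*`-gap `g` is positive
while the estimated gap `e = Â(s, π* s) - Â(s, a)` is nonpositive. If `g < α` the state lies
in the margin event, whose mass is at most `(α/α₀)^β` for each action; otherwise the
estimation discrepancy `g - e` is at least `α`, and `1 ≤ (g - e)² / α²` (Chebyshev) charges
it to the estimation error.
-/

open Finset

lemma misranking_indicator_le {g e α : ℝ} (hα : 0 < α) :
    (if e ≤ 0 then (1 : ℝ) else 0) * (if 0 < g then (1 : ℝ) else 0) ≤
      (if 0 < |g| ∧ |g| < α then (1 : ℝ) else 0) + (g - e) ^ 2 / α ^ 2 := by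
  by_cases he : e ≤ 0
  · by_cases hg : 0 < g
    · by_cases hgα : g < α
      · have hsq : 0 ≤ (g - e) ^ 2 / α ^ 2 := by positivity
        simp [he, hg, abs_of_pos hg, hgα, hsq]
      · have hle : α ≤ g - e := by linarith
        have hone : 1 ≤ (g - e) ^ 2 / α ^ 2 :=
          (one_le_div (by positivity)).mpr (pow_le_pow_left₀ hα.le hle 2)
        simp [he, hg, abs_of_pos hg, hgα, hone]
    · rw [if_neg hg, mul_zero]
      positivity
  · rw [if_neg he, zero_mul]
    positivity

lemma sum_mul_sum_le_of_le {S A : Type*} [Fintype S] [Fintype A] {d : S → ℝ}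
    (hd : ∀ s, 0 ≤ d s) {f m r : S → A → ℝ} (h : ∀ s a, f s a ≤ m s a + r s a) :
    ∑ s, d s * ∑ a, f s a ≤ ∑ a, ∑ s, d s * m s a + ∑ s, d s * ∑ a, r s a := by
  calc ∑ s, d s * ∑ a, f s a ≤ ∑ s, d s * ∑ a, (m s a + r s a) :=
        sum_le_sum fun s _ => mul_le_mul_of_nonneg_left (sum_le_sum fun a _ => h s a) (hd s)
    _ = ∑ a, ∑ s, d s * m s a + ∑ s, d s * ∑ a, r s a := by
        simp only [sum_add_distrib, mul_add, mul_sum]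
        rw [sum_comm]

theorem stmt_17_general {S A : Type*} [Fintype S] [Fintype A]
    (d : S → ℝ) (hd0 : ∀ s, 0 ≤ d s)
    (πstar : S → A) (Qstar Astar Ahat : S → A → ℝ)
    (hA : ∀ s a, Astar s a = Qstar s a - Qstar s (πstar s))
    (α₀ β : ℝ)
    (hmargin : ∀ (a : A) (α : ℝ), 0 < α →
      (∑ s : S, if 0 < |Qstar s (πstar s) - Qstar s a| ∧
          |Qstar s (πstar s) - Qstar s a| < α then d s else 0) ≤ (α / α₀) ^ β)
    (ε : ℝ)
    (hest : (∑ s : S, d s * ∑ a : A,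
        (Astar s (πstar s) - Astar s a - Ahat s (πstar s) + Ahat s a) ^ 2) ≤ ε ^ 2) :
    ∀ α : ℝ, 0 < α →
      (∑ s : S, d s * ∑ a : A,
          (if Ahat s (πstar s) ≤ Ahat s a then (1 : ℝ) else 0) *
            (if Qstar s a < Qstar s (πstar s) then (1 : ℝ) else 0)) ≤
        (Fintype.card A : ℝ) * (α / α₀) ^ β + ε ^ 2 / α ^ 2 := by
  intro α hα
  have hpointwise : ∀ s a,
      (if Ahat s (πstar s) ≤ Ahat s a then (1 : ℝ) else 0) *
          (if Qstar s a < Qstar s (πstar s) then (1 : ℝ) else 0) ≤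
        (if 0 < |Qstar s (πstar s) - Qstar s a| ∧ |Qstar s (πstar s) - Qstar s a| < α
          then (1 : ℝ) else 0) +
        (Astar s (πstar s) - Astar s a - Ahat s (πstar s) + Ahat s a) ^ 2 / α ^ 2 := by
    intro s a
    have h := misranking_indicator_le (g := Qstar s (πstar s) - Qstar s a)
      (e := Ahat s (πstar s) - Ahat s a) hα
    simp only [sub_nonpos, sub_pos] at h
    convert h using 4
    rw [hA, hA]
    ring
  calc _ ≤ _ := sum_mul_sum_le_of_le hd0 hpointwise
    _ ≤ ∑ _a : A, (α / α₀) ^ β + ε ^ 2 / α ^ 2 := by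
        gcongr with a
        · simpa only [mul_ite, mul_one, mul_zero] using hmargin a α hα
        · simp only [← sum_div, ← mul_div_assoc]
          gcongr
    _ = (Fintype.card A : ℝ) * (α / α₀) ^ β + ε ^ 2 / α ^ 2 := by
        rw [sum_const, card_univ, nsmul_eq_mul]

/-- Margin-based fast-rate bound: under the soft margin condition and an advantage
estimation-error bound, the probability mass of misranked strictly suboptimal actions is
at most `|A|·(α/α₀)^β + ε²/α²` for every `α > 0`. -/
theorem stmt_17 {S A : Type*} [Fintype S] [Fintype A]
    (d : S → ℝ) (hd0 : ∀ s, 0 ≤ d s) (hd1 : ∑ s : S, d s = 1)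
    (πstar : S → A) (Qstar Astar Ahat : S → A → ℝ)
    (hA : ∀ s a, Astar s a = Qstar s a - Qstar s (πstar s))
    (α₀ β : ℝ) (hα₀ : 0 < α₀) (hβ : 0 < β)
    (hmargin : ∀ (a : A) (α : ℝ), 0 < α →
      (∑ s : S, if 0 < |Qstar s (πstar s) - Qstar s a| ∧
          |Qstar s (πstar s) - Qstar s a| < α then d s else 0) ≤ (α / α₀) ^ β)
    (ε : ℝ)
    (hest : (∑ s : S, d s * ∑ a : A,
        (Astar s (πstar s) - Astar s a - Ahat s (πstar s) + Ahat s a) ^ 2) ≤ ε ^ 2) :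
    ∀ α : ℝ, 0 < α →
      (∑ s : S, d s * ∑ a : A,
          (if Ahat s (πstar s) ≤ Ahat s a then (1 : ℝ) else 0) *
            (if Qstar s a < Qstar s (πstar s) then (1 : ℝ) else 0)) ≤
        (Fintype.card A : ℝ) * (α / α₀) ^ β + ε ^ 2 / α ^ 2 :=
  stmt_17_general d hd0 πstar Qstar Astar Ahat hA α₀ β hmargin ε hest
end
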